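/- arXiv:1512.08427 — 4 statements merged into one kernel-verified Lean document; each statement's English description precedes it below -/
import Mathlib

section
/- Let h : [0,1] → ℝ be nondecreasing with h(x) > 0 for all x ∈ [0,1]. If the function x ↦ h(x)·(1 − x) is concave on [0,1], then the function x ↦ (1 − x)/h(x) is convex on [0,1]. -/
/-- Regularity implies semi-regularity: if `h` is nondecreasing and positive on `[0,1]`
and `x ↦ h x * (1 - x)` is concave on `[0,1]`, then `x ↦ (1 - x) / h x` is convex on `[0,1]`. -/
theorem regular_implies_semiRegular (h : ℝ → ℝ)
    (hmono : MonotoneOn h (Set.Icc 0 1))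
    (hpos : ∀ x ∈ Set.Icc (0 : ℝ) 1, 0 < h x)
    (hconc : ConcaveOn ℝ (Set.Icc 0 1) (fun x => h x * (1 - x))) :
    ConvexOn ℝ (Set.Icc 0 1) (fun x => (1 - x) / h x) := by
  refine ⟨convex_Icc 0 1, ?_⟩
  intro x hx y hy a b ha hb hab
  have hmem : a • x + b • y ∈ Set.Icc (0:ℝ) 1 := (convex_Icc 0 1) hx hy ha hb hab
  have hc := hconc.2 hx hy ha hb hab
  simp only [smul_eq_mul] at *
  set c := a * x + b * y with hcdef
  have hpx := hpos x hx
  have hpy := hpos y hy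
  have hpc := hpos c hmem
  have hux : 0 ≤ 1 - x := by linarith [hx.2]
  have huy : 0 ≤ 1 - y := by linarith [hy.2]
  have huc : 1 - c = a * (1 - x) + b * (1 - y) := by
    rw [hcdef]; nlinarith [hab]
  have hucnn : 0 ≤ 1 - c := by
    rw [huc]; positivity
  have hRnn : 0 ≤ a * ((1 - x) / h x) + b * ((1 - y) / h y) := by positivity
  rcases eq_or_lt_of_le hucnn with hz | hz
  · have h0 : 1 - c = 0 := hz.symm
    rw [h0, zero_div]
    exact hRnn
  · -- Cauchy-Schwarz: (1-c)^2 ≤ S * R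
    have key : (1 - c)^2 ≤ (a * (h x * (1 - x)) + b * (h y * (1 - y))) *
        (a * ((1 - x) / h x) + b * ((1 - y) / h y)) := by
      rw [huc, ← sub_nonneg]
      have e : (a * (h x * (1 - x)) + b * (h y * (1 - y))) *
          (a * ((1 - x) / h x) + b * ((1 - y) / h y)) - (a * (1 - x) + b * (1 - y)) ^ 2 =
          a * b * ((1 - x) * (1 - y)) * ((h x - h y) ^ 2 / (h x * h y)) := by
        field_simp
        ring
      rw [e]
      positivity
    have hS : 0 ≤ a * (h x * (1 - x)) + b * (h y * (1 - y)) := by positivity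
    rw [div_le_iff₀ hpc]
    nlinarith [mul_le_mul_of_nonneg_right hc hRnn, key, mul_pos hpc hz]
end

section
/- Let Σ be a finite set, let p : Σ → ℝ satisfy p_s ≥ 0 for all s and ∑_{s∈Σ} p_s = 1, let q : Σ → [0,1], let h : Σ → ℝ satisfy h_s > 0 for all s, let λ ≥ 0, and let x, y be real numbers with x ≥ y. If ∑_{s∈Σ} p_s q_s ≥ λ · ∑_{s∈Σ} p_s (1 − q_s)/h_s, then ∑_{s∈Σ} p_s · ( q_s·x + (1 − q_s)·( y − λ(x − y)/h_s ) ) ≥ y. -/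
/-- Per-round inequality in the modification of Lemma 4.2: under the feasibility
constraint of the convex program, the expected Lagrangian utility of the round is
at least `y`, the expected reward of the target arm. -/
theorem per_round_lagrangian_bound {Sig : Type*} [Fintype Sig]
    (p : Sig → ℝ) (hp : ∀ s, 0 ≤ p s) (hpsum : ∑ s, p s = 1)
    (q : Sig → ℝ) (hq : ∀ s, q s ∈ Set.Icc (0 : ℝ) 1)
    (h : Sig → ℝ) (hh : ∀ s, 0 < h s)
    (lam : ℝ) (hlam : 0 ≤ lam)
    (x y : ℝ) (hxy : x ≥ y)
    (hfeas : ∑ s, p s * q s ≥ lam * ∑ s, p s * ((1 - q s) / h s)) :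
    ∑ s, p s * (q s * x + (1 - q s) * (y - lam * (x - y) / h s)) ≥ y := by
  have key : ∑ s, p s * (q s * x + (1 - q s) * (y - lam * (x - y) / h s))
      = (∑ s, p s * q s) * x + ((∑ s, p s) - ∑ s, p s * q s) * y
        - lam * (x - y) * ∑ s, p s * ((1 - q s) / h s) := by
    simp only [Finset.sum_mul, Finset.mul_sum, sub_mul, ← Finset.sum_sub_distrib,
      ← Finset.sum_add_distrib]
    apply Finset.sum_congr rfl
    intro s _
    have := (hh s).ne'
    field_simp
    ring
  rw [key, hpsum]
  nlinarith [hfeas, sub_nonneg.mpr hxy]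
end

section
/- Let μ be a probability measure on (0,∞), let θ > 0, and let P : (0,∞) → [0,1] be measurable with ∫ P dμ = μ((θ,∞)). Then ∫ P(r)/r dμ(r) ≥ ∫_{(θ,∞)} (1/r) dμ(r) (as an inequality of integrals with values in [0,∞]). -/
open MeasureTheory

/-- Threshold policies minimize expected payment: if a policy incentivizes with
probability `P r` an agent of conversion ratio `r`, and its total incentivization
probability equals `μ((θ,∞))`, then its expected payment `∫ P(r)/r dμ` is at least
that of the threshold policy, `∫_{(θ,∞)} 1/r dμ`. -/
theorem threshold_minimizes_payment (μ : Measure ℝ) [IsProbabilityMeasure μ]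
    (hsupp : μ (Set.Iic 0) = 0)
    (θ : ℝ) (hθ : 0 < θ)
    (P : ℝ → ℝ) (hPmeas : Measurable P) (hP : ∀ r, P r ∈ Set.Icc (0 : ℝ) 1)
    (hProb : ∫ r, P r ∂μ = (μ (Set.Ioi θ)).toReal) :
    ∫⁻ r in Set.Ioi θ, ENNReal.ofReal (1 / r) ∂μ ≤
      ∫⁻ r, ENNReal.ofReal (P r / r) ∂μ := by
  set A : Set ℝ := Set.Ioi θ with hA
  have hAmeas : MeasurableSet A := measurableSet_Ioi
  have hPnn : ∀ r, (0:ℝ) ≤ P r := fun r => (hP r).1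
  have hPle : ∀ r, P r ≤ 1 := fun r => (hP r).2
  -- integrability of P
  have hPint : Integrable P μ := by
    refine (integrable_const (1:ℝ)).mono' hPmeas.aestronglyMeasurable ?_
    exact ae_of_all _ fun r => by
      rw [Real.norm_eq_abs, abs_of_nonneg (hPnn r)]; exact hPle r
  -- lintegral form of the constraint
  have key : ∫⁻ r, ENNReal.ofReal (P r) ∂μ = μ A := by
    rw [← ofReal_integral_eq_lintegral_ofReal hPint (ae_of_all _ hPnn), hProb,
      ENNReal.ofReal_toReal (measure_ne_top μ _)]
  -- split the constraint
  have hsplit : ∫⁻ r in A, ENNReal.ofReal (P r) ∂μ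
      + ∫⁻ r in Aᶜ, ENNReal.ofReal (P r) ∂μ = μ A := by
    rw [lintegral_add_compl _ hAmeas]; exact key
  have hμA : μ A = ∫⁻ r in A, ENNReal.ofReal (P r) ∂μ
      + ∫⁻ r in A, ENNReal.ofReal (1 - P r) ∂μ := by
    rw [← lintegral_add_left (hPmeas.ennreal_ofReal)]
    have : ∀ r, ENNReal.ofReal (P r) + ENNReal.ofReal (1 - P r) = 1 := by
      intro r
      rw [← ENNReal.ofReal_add (hPnn r) (by linarith [hPle r])]
      norm_num
    simp only [this]
    simp [Measure.restrict_apply_univ]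
  have hfin : ∫⁻ r in A, ENNReal.ofReal (P r) ∂μ ≠ ⊤ := by
    have : ∫⁻ r in A, ENNReal.ofReal (P r) ∂μ ≤ ∫⁻ _ in A, 1 ∂μ :=
      lintegral_mono fun r => by
        simpa using ENNReal.ofReal_le_ofReal (hPle r)
    simp only [lintegral_one] at this
    exact ne_top_of_le_ne_top (by simp [measure_ne_top]) this
  -- balance: mass missing above θ equals mass of P below θ
  have hbal : ∫⁻ r in Aᶜ, ENNReal.ofReal (P r) ∂μ
      = ∫⁻ r in A, ENNReal.ofReal (1 - P r) ∂μ := by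
    have := hsplit.trans hμA
    exact (ENNReal.add_right_inj hfin).mp this
  -- Aᶜ = Iic θ, which is a.e. equal to Ioc 0 θ
  have hAc : Aᶜ = Set.Iic θ := by
    ext x; simp [hA]
  have hae : (Set.Iic θ : Set ℝ) =ᵐ[μ] Set.Ioc 0 θ := by
    rw [MeasureTheory.ae_eq_set]
    refine ⟨measure_mono_null (fun x hx => ?_) hsupp, ?_⟩
    · obtain ⟨h1, h2⟩ := hx
      simp only [Set.mem_Ioc, not_and] at h2
      refine Set.mem_Iic.mpr ?_
      by_contra h
      push_neg at h
      exact (h2 h) h1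
    · simp [Set.diff_eq_empty.mpr Set.Ioc_subset_Iic_self]
  -- rewrite the balance over Ioc 0 θ
  have hbal' : ∫⁻ r in Set.Ioc 0 θ, ENNReal.ofReal (P r) ∂μ
      = ∫⁻ r in A, ENNReal.ofReal (1 - P r) ∂μ := by
    rw [← hbal, hAc, Measure.restrict_congr_set hae]
  -- measurability of the integrands
  have hm1 : Measurable fun r => ENNReal.ofReal (P r / r) :=
    (hPmeas.div measurable_id).ennreal_ofReal
  have hm2 : Measurable fun r => ENNReal.ofReal ((1 - P r) / θ) :=
    ((measurable_const.sub hPmeas).div_const θ).ennreal_ofReal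
  -- main chain
  calc ∫⁻ r in A, ENNReal.ofReal (1 / r) ∂μ
      ≤ ∫⁻ r in A, (ENNReal.ofReal (P r / r) + ENNReal.ofReal ((1 - P r) / θ)) ∂μ := by
        refine setLIntegral_mono (hm1.add hm2) fun r hr => ?_
        have hrθ : θ < r := hr
        have hr0 : 0 < r := hθ.trans hrθ
        rw [← ENNReal.ofReal_add (div_nonneg (hPnn r) hr0.le)
          (div_nonneg (by linarith [hPle r]) hθ.le)]
        refine ENNReal.ofReal_le_ofReal ?_
        have h1 : (1 - P r) / r ≤ (1 - P r) / θ := by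
          gcongr
          linarith [hPle r]
        have h2 : 1 / r = P r / r + (1 - P r) / r := by
          field_simp
          ring
        linarith
    _ = ∫⁻ r in A, ENNReal.ofReal (P r / r) ∂μ
        + ∫⁻ r in A, ENNReal.ofReal ((1 - P r) / θ) ∂μ := lintegral_add_left hm1 _
    _ = ∫⁻ r in A, ENNReal.ofReal (P r / r) ∂μ
        + (∫⁻ r in A, ENNReal.ofReal (1 - P r) ∂μ) * ENNReal.ofReal (1 / θ) := by
        congr 1
        have : ∀ r, ENNReal.ofReal ((1 - P r) / θ)
            = ENNReal.ofReal (1 - P r) * ENNReal.ofReal (1 / θ) := by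
          intro r
          rw [← ENNReal.ofReal_mul' (by positivity)]
          ring_nf
        simp only [this]
        exact lintegral_mul_const _ (measurable_const.sub hPmeas).ennreal_ofReal
    _ = ∫⁻ r in A, ENNReal.ofReal (P r / r) ∂μ
        + (∫⁻ r in Set.Ioc 0 θ, ENNReal.ofReal (P r) ∂μ) * ENNReal.ofReal (1 / θ) := by
        rw [hbal']
    _ = ∫⁻ r in A, ENNReal.ofReal (P r / r) ∂μ
        + ∫⁻ r in Set.Ioc 0 θ, ENNReal.ofReal (P r / θ) ∂μ := by
        congr 1
        rw [← lintegral_mul_const _ hPmeas.ennreal_ofReal]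
        congr 1
        ext r
        rw [← ENNReal.ofReal_mul' (by positivity)]
        ring_nf
    _ ≤ ∫⁻ r in A, ENNReal.ofReal (P r / r) ∂μ
        + ∫⁻ r in Set.Ioc 0 θ, ENNReal.ofReal (P r / r) ∂μ := by
        refine add_le_add_right ?_ _
        refine setLIntegral_mono hm1 fun r hr => ?_
        have hr0 : 0 < r := hr.1
        exact ENNReal.ofReal_le_ofReal (by gcongr; exacts [hPnn r, hr.2])
    _ ≤ ∫⁻ r in A, ENNReal.ofReal (P r / r) ∂μ
        + ∫⁻ r in Aᶜ, ENNReal.ofReal (P r / r) ∂μ := by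
        refine add_le_add_right ?_ _
        rw [hAc]
        exact lintegral_mono_set Set.Ioc_subset_Iic_self
    _ = ∫⁻ r, ENNReal.ofReal (P r / r) ∂μ := lintegral_add_compl _ hAmeas
end

section
/- Let Σ and Σ′ be finite sets and p : Σ × Σ′ → ℝ with p_{s,s′} ≥ 0 and ∑_{s,s′} p_{s,s′} = 1, such that the marginals p_s = ∑_{s′} p_{s,s′} and p_{s′} = ∑_{s} p_{s,s′} are all strictly positive. Let λ ≥ 0, let q : Σ × Σ′ → [0,1], and for each s ∈ Σ let h_s : [0,1] → ℝ be strictly positive with g_s(x) = (1 − x)/h_s(x) convex on [0,1]. Suppose there exist τ_{s′} > 0 with h_s(q_{s,s′}) = τ_{s′} for all s ∈ Σ, s′ ∈ Σ′. Define q_{s′} = (∑_s p_{s,s′} q_{s,s′})/p_{s′} and q_s = (∑_{s′} p_{s,s′} q_{s,s′})/p_s. If ∑_{s′} p_{s′} q_{s′} ≥ λ·∑_{s′} p_{s′}(1 − q_{s′})/τ_{s′}, then ∑_{s} p_s q_s ≥ λ·∑_{s} p_s (1 − q_s)/h_s(q_s), and moreover ∑_{s} p_s q_s = ∑_{s′}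 p_{s′} q_{s′}. -/
/-- Garbling monotonicity (core of Theorem 3): a feasible solution of the convex
program (1) for a garbled signaling scheme yields a feasible solution for the
original scheme with the same objective value. -/
theorem garbling_feasibility {Sig Sig' : Type*} [Fintype Sig] [Fintype Sig']
    (p : Sig → Sig' → ℝ)
    (hp : ∀ s s', 0 ≤ p s s')
    (hpsum : ∑ s, ∑ s', p s s' = 1)
    (hpS : ∀ s, 0 < ∑ s', p s s')
    (hpS' : ∀ s', 0 < ∑ s, p s s')
    (lam : ℝ) (hlam : 0 ≤ lam)
    (q : Sig → Sig' → ℝ) (hq : ∀ s s', q s s' ∈ Set.Icc (0 : ℝ) 1)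
    (h : Sig → ℝ → ℝ) (hh : ∀ s, ∀ x ∈ Set.Icc (0 : ℝ) 1, 0 < h s x)
    (hconv : ∀ s, ConvexOn ℝ (Set.Icc 0 1) (fun x => (1 - x) / h s x))
    (τ : Sig' → ℝ) (hτ : ∀ s', 0 < τ s')
    (hthresh : ∀ s s', h s (q s s') = τ s')
    (hfeas : ∑ s', (∑ s, p s s') * ((∑ s, p s s' * q s s') / (∑ s, p s s')) ≥
      lam * ∑ s', (∑ s, p s s') *
        ((1 - (∑ s, p s s' * q s s') / (∑ s, p s s')) / τ s')) :
    (∑ s, (∑ s', p s s') * ((∑ s', p s s' * q s s') / (∑ s', p s s')) ≥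
      lam * ∑ s, (∑ s', p s s') *
        ((1 - (∑ s', p s s' * q s s') / (∑ s', p s s')) /
          h s ((∑ s', p s s' * q s s') / (∑ s', p s s')))) ∧
    (∑ s, (∑ s', p s s') * ((∑ s', p s s' * q s s') / (∑ s', p s s')) =
      ∑ s', (∑ s, p s s') * ((∑ s, p s s' * q s s') / (∑ s, p s s'))) := by
  have hPs : ∀ s : Sig, (∑ s', p s s') ≠ 0 := fun s => (hpS s).ne'
  have hPs' : ∀ s' : Sig', (∑ s, p s s') ≠ 0 := fun s' => (hpS' s').ne'
  have hobjS : ∑ s, (∑ s', p s s') * ((∑ s', p s s' * q s s') / (∑ s', p s s'))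
      = ∑ s, ∑ s', p s s' * q s s' := by
    refine Finset.sum_congr rfl fun s _ => ?_
    rw [mul_comm, div_mul_cancel₀ _ (hPs s)]
  have hobjS' : ∑ s', (∑ s, p s s') * ((∑ s, p s s' * q s s') / (∑ s, p s s'))
      = ∑ s', ∑ s, p s s' * q s s' := by
    refine Finset.sum_congr rfl fun s' _ => ?_
    rw [mul_comm, div_mul_cancel₀ _ (hPs' s')]
  have hswap : ∑ s, ∑ s', p s s' * q s s' = ∑ s', ∑ s, p s s' * q s s' :=
    Finset.sum_comm
  have heq : ∑ s, (∑ s', p s s') * ((∑ s', p s s' * q s s') / (∑ s', p s s')) =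
      ∑ s', (∑ s, p s s') * ((∑ s, p s s' * q s s') / (∑ s, p s s')) := by
    rw [hobjS, hobjS', hswap]
  refine ⟨?_, heq⟩
  -- Jensen inequality for each original signal s
  have key : ∀ s, (∑ s', p s s') *
      ((1 - (∑ s', p s s' * q s s') / (∑ s', p s s')) /
        h s ((∑ s', p s s' * q s s') / (∑ s', p s s')))
      ≤ ∑ s', p s s' * ((1 - q s s') / τ s') := by
    intro s
    have hcm : Finset.univ.centerMass (p s) (q s)
        = (∑ s', p s s' * q s s') / (∑ s', p s s') := by
      rw [Finset.centerMass]
      simp [smul_eq_mul, div_eq_inv_mul]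
    have hJ := (hconv s).map_centerMass_le (fun i _ => hp s i)
        (by simpa using hpS s) (fun i _ => hq s i)
    rw [hcm] at hJ
    have hrhs : Finset.univ.centerMass (p s) ((fun x => (1 - x) / h s x) ∘ q s)
        = (∑ s', p s s' * ((1 - q s s') / τ s')) / (∑ s', p s s') := by
      rw [Finset.centerMass]
      simp only [smul_eq_mul, Function.comp]
      rw [div_eq_inv_mul]
      congr 1
      exact Finset.sum_congr rfl fun s' _ => by rw [hthresh s s']
    rw [hrhs] at hJ
    calc (∑ s', p s s') *
        ((1 - (∑ s', p s s' * q s s') / (∑ s', p s s')) /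
          h s ((∑ s', p s s' * q s s') / (∑ s', p s s')))
        ≤ (∑ s', p s s') *
          ((∑ s', p s s' * ((1 - q s s') / τ s')) / (∑ s', p s s')) :=
          mul_le_mul_of_nonneg_left hJ (hpS s).le
      _ = ∑ s', p s s' * ((1 - q s s') / τ s') := by
          rw [mul_comm, div_mul_cancel₀ _ (hPs s)]
  -- rewrite the garbled constraint RHS
  have hR' : ∑ s', (∑ s, p s s') *
      ((1 - (∑ s, p s s' * q s s') / (∑ s, p s s')) / τ s')
      = ∑ s', ∑ s, p s s' * ((1 - q s s') / τ s') := by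
    refine Finset.sum_congr rfl fun s' _ => ?_
    rw [mul_div_assoc', mul_sub, mul_one, mul_comm, div_mul_cancel₀ _ (hPs' s')]
    rw [← Finset.sum_sub_distrib, Finset.sum_div]
    refine Finset.sum_congr rfl fun s _ => ?_
    field_simp
  have hkey_sum : ∑ s, (∑ s', p s s') *
      ((1 - (∑ s', p s s' * q s s') / (∑ s', p s s')) /
        h s ((∑ s', p s s' * q s s') / (∑ s', p s s')))
      ≤ ∑ s', ∑ s, p s s' * ((1 - q s s') / τ s') := by
    rw [← Finset.sum_comm]
    exact Finset.sum_le_sum fun s _ => key s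
  calc lam * ∑ s, (∑ s', p s s') *
        ((1 - (∑ s', p s s' * q s s') / (∑ s', p s s')) /
          h s ((∑ s', p s s' * q s s') / (∑ s', p s s')))
      ≤ lam * ∑ s', ∑ s, p s s' * ((1 - q s s') / τ s') :=
        mul_le_mul_of_nonneg_left hkey_sum hlam
    _ = lam * ∑ s', (∑ s, p s s') *
        ((1 - (∑ s, p s s' * q s s') / (∑ s, p s s')) / τ s') := by rw [hR']
    _ ≤ ∑ s', (∑ s, p s s') * ((∑ s, p s s' * q s s') / (∑ s, p s s')) := hfeas
    _ = ∑ s, (∑ s', p s s') * ((∑ s', p s s' * q s s') / (∑ s', p s s')) := heq.symm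
end
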